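/- arXiv:1406.5018 — 6 statements merged into one kernel-verified Lean document; each statement's English description precedes it below -/
import Mathlib

section
/- Let v : {0,...,M} → ℝ with v(0) = 0 and let h_i > 0 for i = 1,...,M with ∑_{i=1}^M h_i = 1. Define h̄_i = (h_i + h_{i+1})/2 for 1 ≤ i ≤ M-1. Then the discrete L² norm of v is controlled by the discrete H¹ seminorm: ∑_{i=1}^{M-1} h̄_i v(i)² ≤ ∑_{i=1}^{M} h_i^{-1} (v(i)-v(i-1))². -/
/-- One-dimensional discrete Poincaré (Friedrichs) inequality on a non-uniform mesh of `(0,1)`: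
if `v 0 = 0`, the steps `h i > 0` sum to `1`, and `h̄ i = (h i + h (i+1))/2`, then
`∑_{i=1}^{M-1} h̄ i * v i ^ 2 ≤ ∑_{i=1}^{M} (v i - v (i-1))^2 / h i`. -/
theorem stmt_5 (M : ℕ) (h : ℕ → ℝ) (v : ℕ → ℝ)
    (hpos : ∀ i ∈ Finset.Icc 1 M, 0 < h i)
    (hsum : ∑ i ∈ Finset.Icc 1 M, h i = 1)
    (hv0 : v 0 = 0) :
    ∑ i ∈ Finset.Icc 1 (M - 1), (h i + h (i + 1)) / 2 * v i ^ 2 ≤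
      ∑ i ∈ Finset.Icc 1 M, (v i - v (i - 1)) ^ 2 / h i := by
  set S := ∑ i ∈ Finset.Icc 1 M, (v i - v (i - 1)) ^ 2 / h i with hS
  have hSnn : 0 ≤ S := Finset.sum_nonneg fun i hi => div_nonneg (sq_nonneg _) (hpos i hi).le
  rcases Nat.eq_zero_or_pos M with hM0 | hM1
  · subst hM0; simpa using hSnn
  -- key pointwise bound
  have key : ∀ i ∈ Finset.Icc 1 (M - 1), v i ^ 2 ≤ S := by
    intro i hi
    rw [Finset.mem_Icc] at hi
    have hiM : i ≤ M := le_trans hi.2 (Nat.sub_le _ _)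
    have hsub : Finset.Icc 1 i ⊆ Finset.Icc 1 M := Finset.Icc_subset_Icc_right hiM
    have htel : ∀ n : ℕ, v n = ∑ m ∈ Finset.Icc 1 n, (v m - v (m - 1)) := by
      intro n
      induction n with
      | zero => simpa using hv0
      | succ k ih =>
        rw [Finset.sum_Icc_succ_top (Nat.le_add_left 1 k), ← ih]
        simp
    have htel := htel i
    have hh : ∀ m ∈ Finset.Icc 1 i, 0 < h m := fun m hm => hpos m (hsub hm)
    have cs := Finset.sq_sum_div_le_sum_sq_div (Finset.Icc 1 i)
      (fun m => v m - v (m - 1)) hh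
    have hhnn : ∀ m ∈ Finset.Icc 1 M, 0 ≤ h m := fun m hm => (hpos m hm).le
    have hsum_le : ∑ m ∈ Finset.Icc 1 i, h m ≤ 1 := by
      rw [← hsum]
      exact Finset.sum_le_sum_of_subset_of_nonneg hsub fun m hm _ => hhnn m hm
    have hsum_pos : 0 < ∑ m ∈ Finset.Icc 1 i, h m := by
      apply Finset.sum_pos hh
      exact Finset.nonempty_Icc.mpr hi.1
    have hpart : ∑ m ∈ Finset.Icc 1 i, (v m - v (m - 1)) ^ 2 / h m ≤ S := by
      apply Finset.sum_le_sum_of_subset_of_nonneg hsub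
      intro m hm _
      exact div_nonneg (sq_nonneg _) (hhnn m hm)
    calc v i ^ 2 = (∑ m ∈ Finset.Icc 1 i, (v m - v (m - 1))) ^ 2 := by rw [← htel]
      _ ≤ (∑ m ∈ Finset.Icc 1 i, h m) *
            (∑ m ∈ Finset.Icc 1 i, (v m - v (m - 1)) ^ 2 / h m) := by
          rw [← div_le_iff₀' hsum_pos] at *
          exact le_trans cs le_rfl
      _ ≤ 1 * S := by
          apply mul_le_mul hsum_le hpart (Finset.sum_nonneg fun m hm =>
            div_nonneg (sq_nonneg _) (hh m hm).le) zero_le_one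
      _ = S := one_mul S
  -- sum of averaged steps is at most 1
  have hbar : ∑ i ∈ Finset.Icc 1 (M - 1), (h i + h (i + 1)) / 2 ≤ 1 := by
    have h1 : ∑ i ∈ Finset.Icc 1 (M - 1), h i ≤ 1 := by
      rw [← hsum]
      exact Finset.sum_le_sum_of_subset_of_nonneg
        (Finset.Icc_subset_Icc_right (Nat.sub_le _ _))
        (fun m hm _ => (hpos m hm).le)
    have h2 : ∑ i ∈ Finset.Icc 1 (M - 1), h (i + 1) ≤ 1 := by
      obtain ⟨N, rfl⟩ : ∃ N, M = N + 1 := ⟨M - 1, (Nat.succ_pred_eq_of_pos hM1).symm⟩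
      have hmap : ∑ i ∈ Finset.Icc 1 (N + 1 - 1), h (i + 1) = ∑ j ∈ Finset.Icc 2 (N + 1), h j := by
        rw [← Finset.map_add_right_Icc 1 N 1, Finset.sum_map]
        simp [addRightEmbedding]
      rw [hmap, ← hsum]
      exact Finset.sum_le_sum_of_subset_of_nonneg
        (Finset.Icc_subset_Icc_left one_le_two)
        (fun m hm _ => (hpos m hm).le)
    calc ∑ i ∈ Finset.Icc 1 (M - 1), (h i + h (i + 1)) / 2
        = ((∑ i ∈ Finset.Icc 1 (M - 1), h i) + ∑ i ∈ Finset.Icc 1 (M - 1), h (i + 1)) / 2 := by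
          rw [← Finset.sum_add_distrib, Finset.sum_div]
      _ ≤ (1 + 1) / 2 := by linarith
      _ = 1 := by norm_num
  have hbarnn : ∀ i ∈ Finset.Icc 1 (M - 1), 0 ≤ (h i + h (i + 1)) / 2 := by
    intro i hi
    rw [Finset.mem_Icc] at hi
    have hi1 : i ∈ Finset.Icc 1 M := Finset.mem_Icc.mpr ⟨hi.1, le_trans hi.2 (Nat.sub_le _ _)⟩
    have hi2 : i + 1 ∈ Finset.Icc 1 M := Finset.mem_Icc.mpr
      ⟨Nat.le_add_right 1 i |>.trans (by omega), by omega⟩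
    have := hpos i hi1
    have := hpos (i + 1) hi2
    positivity
  calc ∑ i ∈ Finset.Icc 1 (M - 1), (h i + h (i + 1)) / 2 * v i ^ 2
      ≤ ∑ i ∈ Finset.Icc 1 (M - 1), (h i + h (i + 1)) / 2 * S := by
        apply Finset.sum_le_sum
        intro i hi
        exact mul_le_mul_of_nonneg_left (key i hi) (hbarnn i hi)
    _ = (∑ i ∈ Finset.Icc 1 (M - 1), (h i + h (i + 1)) / 2) * S := by
        rw [Finset.sum_mul]
    _ ≤ 1 * S := mul_le_mul_of_nonneg_right hbar hSnn
    _ = S := one_mul S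
end

section
/- In the two-dimensional analogue, for a mesh function v on a tensor-product mesh of the unit square vanishing on the boundary, with averaging operator μ_x v_{ij} = (1/(8 h̄^x_i))[h^x_i v_{i-1,j} + 6 h̄^x_i v_{ij} + h^x_{i+1} v_{i+1,j}], one has (μ_x v, v]_y ≥ (1/2)‖v‖²_{]y}. -/
lemma aux_id_stmt8 (h a : ℕ → ℝ) (n : ℕ) :
    ∑ i ∈ Finset.Icc 1 n,
        (h i * a (i - 1) * a i + h (i + 1) * a i * a (i + 1) +
          (h i + h (i + 1)) * a i ^ 2)
      = ∑ i ∈ Finset.Icc 1 n, h i * (a (i - 1) + a i) ^ 2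
        - h 1 * a 0 * a 1 - h 1 * a 0 ^ 2 + h (n + 1) * a n * a (n + 1) +
          h (n + 1) * a n ^ 2 := by
  induction n with
  | zero => simp; ring
  | succ n ih =>
    rw [Finset.sum_Icc_succ_top (by omega), Finset.sum_Icc_succ_top (by omega), ih]
    simp only [Nat.add_sub_cancel]
    ring

lemma aux_nonneg_stmt8 (M : ℕ) (hM : 1 ≤ M) (h : ℕ → ℝ)
    (hpos : ∀ i ∈ Finset.Icc 1 M, 0 < h i) (a : ℕ → ℝ)
    (ha0 : a 0 = 0) (haM : a M = 0) :
    0 ≤ ∑ i ∈ Finset.Icc 1 (M - 1),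
        (h i * a (i - 1) * a i + h (i + 1) * a i * a (i + 1) +
          (h i + h (i + 1)) * a i ^ 2) := by
  rw [aux_id_stmt8]
  have hM1 : M - 1 + 1 = M := by omega
  rw [hM1, ha0, haM]
  have h1 : 0 ≤ ∑ i ∈ Finset.Icc 1 (M - 1), h i * (a (i - 1) + a i) ^ 2 := by
    refine Finset.sum_nonneg fun i hi => mul_nonneg (le_of_lt (hpos i ?_)) (sq_nonneg _)
    simp only [Finset.mem_Icc] at hi ⊢; omega
  have h2 : 0 < h M := hpos M (by simp [hM])
  nlinarith [sq_nonneg (a (M - 1))]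

/-- 2D coercivity of the averaging operator `μ_x`:
`(μ_x v, v]_y ≥ (1/2)‖v‖²_{]y}` for mesh functions vanishing on the boundary. -/
theorem stmt_8 (Mx My : ℕ) (hMx : 1 ≤ Mx) (hMy : 1 ≤ My)
    (hx hy : ℕ → ℝ)
    (hxpos : ∀ i ∈ Finset.Icc 1 Mx, 0 < hx i)
    (hypos : ∀ j ∈ Finset.Icc 1 My, 0 < hy j)
    (hxsum : ∑ i ∈ Finset.Icc 1 Mx, hx i = 1)
    (hysum : ∑ j ∈ Finset.Icc 1 My, hy j = 1)
    (v : ℕ → ℕ → ℝ)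
    (hbd : ∀ i j, i = 0 ∨ i = Mx ∨ j = 0 ∨ j = My → v i j = 0) :
    (∑ i ∈ Finset.Icc 1 (Mx - 1), ∑ j ∈ Finset.Icc 1 My,
        ((hx i + hx (i + 1)) / 2) * hy j *
          ((1 / (8 * ((hx i + hx (i + 1)) / 2))) *
            (hx i * v (i - 1) j + 6 * ((hx i + hx (i + 1)) / 2) * v i j +
              hx (i + 1) * v (i + 1) j)) * v i j) ≥
      (1 / 2) *
        ∑ i ∈ Finset.Icc 1 (Mx - 1), ∑ j ∈ Finset.Icc 1 My,
          ((hx i + hx (i + 1)) / 2) * hy j * v i j ^ 2 := by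
  rw [ge_iff_le, ← sub_nonneg, Finset.mul_sum]
  simp_rw [Finset.mul_sum]
  rw [← Finset.sum_sub_distrib]
  simp_rw [← Finset.sum_sub_distrib]
  have key : ∀ i ∈ Finset.Icc 1 (Mx - 1), ∀ j ∈ Finset.Icc 1 My,
      ((hx i + hx (i + 1)) / 2) * hy j *
          ((1 / (8 * ((hx i + hx (i + 1)) / 2))) *
            (hx i * v (i - 1) j + 6 * ((hx i + hx (i + 1)) / 2) * v i j +
              hx (i + 1) * v (i + 1) j)) * v i j
        - (1 / 2) * (((hx i + hx (i + 1)) / 2) * hy j * v i j ^ 2)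
      = hy j / 8 *
          (hx i * v (i - 1) j * v i j + hx (i + 1) * v i j * v (i + 1) j +
            (hx i + hx (i + 1)) * v i j ^ 2) := by
    intro i hi j hj
    simp only [Finset.mem_Icc] at hi
    have h1 : 0 < hx i := hxpos i (by simp only [Finset.mem_Icc]; omega)
    have h2 : 0 < hx (i + 1) := hxpos (i + 1) (by simp only [Finset.mem_Icc]; omega)
    have hne : hx i + hx (i + 1) ≠ 0 := by positivity
    field_simp
    ring
  rw [Finset.sum_congr rfl fun i hi => Finset.sum_congr rfl fun j hj => key i hi j hj]
  rw [Finset.sum_comm]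
  refine Finset.sum_nonneg fun j hj => ?_
  rw [← Finset.mul_sum]
  refine mul_nonneg (by linarith [hypos j hj]) ?_
  exact aux_nonneg_stmt8 Mx hMx hx hxpos (fun i => v i j)
    (hbd 0 j (Or.inl rfl)) (hbd Mx j (Or.inr (Or.inl rfl)))
end

section
/- With the summation-by-parts identity (−Δ⁺_x w, v) = (w, Δ⁻_x v]_x for mesh functions vanishing on the boundary (and analogously in y and z), and assuming (Δ⁻_x μ_{yz} v, Δ⁻_x v]_x ≥ (5/8)‖Δ⁻_x v‖²_{]x} and the analogous y, z estimates, together with ‖v‖² ≤ (1/3)|v|²_{1,h}, the discrete Laplacian L^h v = −(Δ⁺_x Δ⁻_x μ_{yz} + Δ⁺_y Δ⁻_y μ_{xz} + Δ⁺_z Δ⁻_z μ_{xy})v satisfies (L^h v, v) ≥ (15/32)‖v‖²_{1,h}, and consequently ‖v‖_{1,h} ≤ (32/15)‖L^h v‖_{−1,h}. -/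
open RealInnerProductSpace

/-- Abstract form of the stability estimate for the discrete Laplacian `L^h` on the
(finite-dimensional) space of mesh functions vanishing on the boundary.  Assuming the
summation-by-parts identity `(L^h v, v) = (Δ⁻ₓ μ_{yz} v, Δ⁻ₓ v]ₓ + (y-term) + (z-term)`,
the coercivity bounds (each term `≥ (5/8)` times the corresponding seminorm part
`‖Δ⁻ₓ v‖²_{]x}` etc.), and the discrete Poincaré inequality `‖v‖² ≤ (1/3)|v|²_{1,h}`, one gets
`(L^h v, v) ≥ (15/32)‖v‖²_{1,h}` and `‖v‖_{1,h} ≤ (32/15)‖L^h v‖_{−1,h}`, where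
`‖w‖_{−1,h} = sup_{u ≠ 0} |(w,u)|/‖u‖_{1,h}` and `‖v‖²_{1,h} = ‖v‖² + |v|²_{1,h}` with
`|v|²_{1,h} = ax v + ay v + az v`. -/
theorem stmt_9 {V : Type*} [NormedAddCommGroup V] [InnerProductSpace ℝ V]
    [FiniteDimensional ℝ V] [Nontrivial V]
    (Lh : V →ₗ[ℝ] V) (A B C ax ay az : V → ℝ)
    (haxnn : ∀ v, 0 ≤ ax v) (haynn : ∀ v, 0 ≤ ay v) (haznn : ∀ v, 0 ≤ az v)
    (hsbp : ∀ v, ⟪Lh v, v⟫ = A v + B v + C v)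
    (hA : ∀ v, A v ≥ (5 / 8) * ax v)
    (hB : ∀ v, B v ≥ (5 / 8) * ay v)
    (hC : ∀ v, C v ≥ (5 / 8) * az v)
    (hpoincare : ∀ v, ⟪v, v⟫ ≤ (1 / 3) * (ax v + ay v + az v)) :
    ∀ v : V,
      ⟪Lh v, v⟫ ≥ (15 / 32) * (⟪v, v⟫ + (ax v + ay v + az v)) ∧
      Real.sqrt (⟪v, v⟫ + (ax v + ay v + az v)) ≤
        (32 / 15) *
          ⨆ w : {w : V // w ≠ 0},
            |⟪Lh v, (w : V)⟫| /
              Real.sqrt (⟪(w : V), (w : V)⟫ + (ax (w : V) + ay (w : V) + az (w : V))) := by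

  have hs : ∀ u : V, 0 ≤ ax u + ay u + az u := fun u => by
    have := haxnn u; have := haynn u; have := haznn u; linarith
  have key : ∀ u : V, ⟪Lh u, u⟫ ≥ (15 / 32) * (⟪u, u⟫ + (ax u + ay u + az u)) := by
    intro u
    have h1 := hsbp u
    have h2 := hA u; have h3 := hB u; have h4 := hC u; have h5 := hpoincare u
    have := haxnn u; have := haynn u; have := haznn u
    nlinarith
  intro v
  refine ⟨key v, ?_⟩
  set N : V → ℝ := fun u => Real.sqrt (⟪u, u⟫ + (ax u + ay u + az u)) with hN
  have hNnn : ∀ u, 0 ≤ N u := fun u => Real.sqrt_nonneg _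
  have hinn : ∀ u : V, ⟪u, u⟫ = ‖u‖ ^ 2 := fun u => real_inner_self_eq_norm_sq u
  have hNge : ∀ u : V, ‖u‖ ≤ N u := by
    intro u
    have h1 : ‖u‖ = Real.sqrt (‖u‖ ^ 2) := (Real.sqrt_sq (norm_nonneg u)).symm
    rw [h1]
    exact Real.sqrt_le_sqrt (by have := hs u; rw [hinn u] at *; linarith)
  have hNsq : ∀ u : V, N u ^ 2 = ⟪u, u⟫ + (ax u + ay u + az u) := by
    intro u
    exact Real.sq_sqrt (by have := hs u; have : 0 ≤ ⟪u, u⟫ := real_inner_self_nonneg; linarith [hs u])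
  have hbdd : BddAbove (Set.range fun w : {w : V // w ≠ 0} => |⟪Lh v, (w : V)⟫| / N (w : V)) := by
    refine ⟨‖Lh v‖, ?_⟩
    rintro x ⟨w, rfl⟩
    have hwpos : 0 < ‖(w : V)‖ := norm_pos_iff.mpr w.2
    have hNpos : 0 < N (w : V) := lt_of_lt_of_le hwpos (hNge _)
    rw [div_le_iff₀ hNpos]
    calc |⟪Lh v, (w : V)⟫| ≤ ‖Lh v‖ * ‖(w : V)‖ := abs_real_inner_le_norm _ _
      _ ≤ ‖Lh v‖ * N (w : V) := by
          exact mul_le_mul_of_nonneg_left (hNge _) (norm_nonneg _)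
  have hne : Nonempty {w : V // w ≠ 0} := by
    obtain ⟨x, hx⟩ := exists_ne (0 : V)
    exact ⟨⟨x, hx⟩⟩
  by_cases hv : v = 0
  · obtain ⟨w0⟩ := hne
    have hterm : (0 : ℝ) ≤ |⟪Lh v, (w0 : V)⟫| / N (w0 : V) :=
      div_nonneg (abs_nonneg _) (hNnn _)
    have hsup : (0 : ℝ) ≤ ⨆ w : {w : V // w ≠ 0}, |⟪Lh v, (w : V)⟫| / N (w : V) :=
      le_trans hterm (le_ciSup hbdd w0)
    have h0 : ⟪v, v⟫ + (ax v + ay v + az v) = 0 := by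
      have h1 := key v
      have h2 : ⟪Lh v, v⟫ = 0 := by rw [hv]; simp
      have h3 : (0:ℝ) ≤ ⟪v, v⟫ := real_inner_self_nonneg
      have := hs v
      nlinarith
    rw [h0, Real.sqrt_zero]
    linarith
  · have hvpos : 0 < N v := lt_of_lt_of_le (norm_pos_iff.mpr hv) (hNge v)
    have hterm : (15 / 32) * N v ≤ |⟪Lh v, v⟫| / N v := by
      rw [le_div_iff₀ hvpos]
      have h1 : ⟪Lh v, v⟫ ≤ |⟪Lh v, v⟫| := le_abs_self _
      have h2 := key v
      nlinarith [hNsq v]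
    have hle : |⟪Lh v, v⟫| / N v ≤ ⨆ w : {w : V // w ≠ 0}, |⟪Lh v, (w : V)⟫| / N (w : V) :=
      le_ciSup hbdd ⟨v, hv⟩
    have : (15 / 32) * N v ≤ ⨆ w : {w : V // w ≠ 0}, |⟪Lh v, (w : V)⟫| / N (w : V) :=
      le_trans hterm hle
    show N v ≤ _
    linarith
end

section
/- (Tartar's lemma, step 0: finite-dimensional kernel.) Let E be a Banach space, E₀, E₁ normed spaces, A₀ : E → E₀ a compact linear operator and A₁ : E → E₁ a continuous linear operator. Suppose there is a constant C₀ such that ‖g‖_E ≤ C₀(‖A₀ g‖_{E₀} + ‖A₁ g‖_{E₁}) for all g ∈ E. Then P := Ker(A₁) is finite dimensional. -/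
/-!
On `P = ker A₁` the hypothesis reads `‖g‖ ≤ C₀ ‖A₀ g‖`, so `A₀` restricted to `P` is antilipschitz,
hence a uniform embedding. The preimage under it of the compact set that `A₀` maps a neighbourhood
of `0` into is then a totally bounded neighbourhood of `0` in `P`, and Riesz's theorem makes `P`
finite dimensional.
-/

theorem FiniteDimensional.of_isCompactOperator_of_isUniformInducing (𝕜 : Type*)
    [NontriviallyNormedField 𝕜] [CompleteSpace 𝕜] {F G : Type*} [AddCommGroup F] [Module 𝕜 F]
    [UniformSpace F] [T2Space F] [IsUniformAddGroup F] [ContinuousSMul 𝕜 F] [UniformSpace G]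
    {f : F → G} (hf : IsCompactOperator f) (hf_unif : IsUniformInducing f) :
    FiniteDimensional 𝕜 F :=
  let ⟨_, hK, hK_nhds⟩ := hf
  .of_totallyBounded_nhds_zero 𝕜 hK_nhds (totallyBounded_preimage hf_unif hK.totallyBounded)

theorem FiniteDimensional.of_isCompactOperator_of_norm_le_mul {𝕜 : Type*}
    [NontriviallyNormedField 𝕜] [CompleteSpace 𝕜] {F G : Type*}
    [NormedAddCommGroup F] [NormedSpace 𝕜 F] [SeminormedAddCommGroup G] [NormedSpace 𝕜 G]
    (T : F →L[𝕜] G) (hT : IsCompactOperator T) (C : ℝ) (hC : ∀ x, ‖x‖ ≤ C * ‖T x‖) :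
    FiniteDimensional 𝕜 F := by
  have hT_anti : AntilipschitzWith C.toNNReal T := T.antilipschitz_of_bound fun x ↦
    (hC x).trans (mul_le_mul_of_nonneg_right (Real.le_coe_toNNReal C) (norm_nonneg _))
  exact .of_isCompactOperator_of_isUniformInducing 𝕜 hT
    (hT_anti.isUniformInducing T.uniformContinuous)

theorem stmt_11_general {E E₀ E₁ : Type*}
    [NormedAddCommGroup E] [NormedSpace ℝ E]
    [NormedAddCommGroup E₀] [NormedSpace ℝ E₀]
    [NormedAddCommGroup E₁] [NormedSpace ℝ E₁]
    (A₀ : E →L[ℝ] E₀) (hA₀ : IsCompactOperator A₀)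
    (A₁ : E →L[ℝ] E₁)
    (C₀ : ℝ) (hbound : ∀ g : E, ‖g‖ ≤ C₀ * (‖A₀ g‖ + ‖A₁ g‖)) :
    FiniteDimensional ℝ (LinearMap.ker (A₁ : E →ₗ[ℝ] E₁)) := by
  set P := LinearMap.ker (A₁ : E →ₗ[ℝ] E₁)
  refine .of_isCompactOperator_of_norm_le_mul (A₀ ∘L P.subtypeL) (hA₀.comp_clm P.subtypeL) C₀
    fun g ↦ ?_
  have hg : A₁ g = 0 := g.2
  simpa [hg] using hbound g

/-- Tartar's lemma, step 0: if `A₀ : E → E₀` is a compact linear operator, `A₁ : E → E₁` is a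
continuous linear operator and `‖g‖ ≤ C₀(‖A₀g‖ + ‖A₁g‖)` for all `g`, then `Ker A₁` is
finite dimensional. -/
theorem stmt_11 {E E₀ E₁ : Type*}
    [NormedAddCommGroup E] [NormedSpace ℝ E] [CompleteSpace E]
    [NormedAddCommGroup E₀] [NormedSpace ℝ E₀]
    [NormedAddCommGroup E₁] [NormedSpace ℝ E₁]
    (A₀ : E →L[ℝ] E₀) (hA₀ : IsCompactOperator A₀)
    (A₁ : E →L[ℝ] E₁)
    (C₀ : ℝ) (hbound : ∀ g : E, ‖g‖ ≤ C₀ * (‖A₀ g‖ + ‖A₁ g‖)) :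
    FiniteDimensional ℝ (LinearMap.ker (A₁ : E →ₗ[ℝ] E₁)) :=
  stmt_11_general A₀ hA₀ A₁ C₀ hbound
end

section
/- (Tartar's lemma, step I.) Under the hypotheses: E a Banach space, E₀, E₁ normed spaces, A₀ : E → E₀ compact linear, A₁ : E → E₁ continuous linear, and ‖g‖_E ≤ C₀(‖A₀g‖_{E₀} + ‖A₁g‖_{E₁}) for all g ∈ E, and assuming E is reflexive (so bounded sequences have weakly convergent subsequences), there exists a constant C₁ such that for all g ∈ E, inf_{p ∈ Ker(A₁)} ‖g − p‖_E ≤ C₁ ‖A₁ g‖_{E₁}. -/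
/-!
If the estimate failed, there would be `uₙ` with `‖[uₙ]‖ = 1` in `E ⧸ ker A₁`, `‖uₙ‖ < 2` and
`A₁ uₙ → 0`. Compactness of `A₀` makes `A₀ uₙ` converge along a subsequence, and the bound
`‖g‖ ≤ C₀ (‖A₀ g‖ + ‖A₁ g‖)` says that `g ↦ (A₀ g, A₁ g)` is antilipschitz, so that subsequence
is Cauchy in `E`. Its limit lies in `ker A₁`, which forces `‖[uₙ]‖ → 0`.
-/

open Filter Topology

theorem Submodule.Quotient.norm_mk_eq_iInf_norm_sub {R M : Type*} [Ring R]
    [SeminormedAddCommGroup M] [Module R M] (S : Submodule R M) (g : M) :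
    ‖(Submodule.Quotient.mk g : M ⧸ S)‖ = ⨅ p : S, ‖g - (p : M)‖ := by
  calc ‖(Submodule.Quotient.mk g : M ⧸ S)‖ = Metric.infDist g S :=
        QuotientAddGroup.norm_mk (S := S.toAddSubgroup) g
    _ = ⨅ p : S, ‖g - (p : M)‖ := by
        rw [Metric.infDist_eq_iInf]
        exact iInf_congr fun p => dist_eq_norm _ _

theorem exists_norm_mkQ_eq_one_of_pos {E F : Type*} [NormedAddCommGroup E] [NormedSpace ℝ E]
    [AddCommGroup F] [Module ℝ F] (f : E →ₗ[ℝ] F) {g : E} (hg : 0 < ‖(LinearMap.ker f).mkQ g‖) :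
    ∃ h : E, ‖(LinearMap.ker f).mkQ h‖ = 1 ∧ ‖h‖ < 2 ∧
      f h = ‖(LinearMap.ker f).mkQ g‖⁻¹ • f g := by
  set c := ‖(LinearMap.ker f).mkQ g‖⁻¹
  have hunit : ‖(LinearMap.ker f).mkQ (c • g)‖ = 1 := by
    rw [map_smul, norm_smul, norm_inv, norm_norm, inv_mul_cancel₀ hg.ne']
  obtain ⟨h, hmk, hlt⟩ := Submodule.Quotient.norm_mk_lt ((LinearMap.ker f).mkQ (c • g)) one_pos
  refine ⟨h, by rwa [Submodule.mkQ_apply, hmk], by linarith, ?_⟩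
  rw [← map_smul, ← sub_eq_zero, ← map_sub, ← LinearMap.mem_ker, ← Submodule.Quotient.eq]
  exact hmk

section

variable {E E₀ E₁ : Type*} [NormedAddCommGroup E] [NormedSpace ℝ E]
  [NormedAddCommGroup E₀] [NormedSpace ℝ E₀] [NormedAddCommGroup E₁] [NormedSpace ℝ E₁]
  {A₀ : E →L[ℝ] E₀} {A₁ : E →L[ℝ] E₁} {C₀ : ℝ}

theorem antilipschitzWith_prod_of_norm_le (hbound : ∀ g, ‖g‖ ≤ C₀ * (‖A₀ g‖ + ‖A₁ g‖)) :
    AntilipschitzWith (2 * C₀.toNNReal) (A₀.prod A₁) := by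
  refine (A₀.prod A₁).antilipschitz_of_bound fun g => ?_
  have hsum : ‖A₀ g‖ + ‖A₁ g‖ ≤ 2 * ‖A₀.prod A₁ g‖ := by
    rw [ContinuousLinearMap.prod_apply, Prod.norm_def]
    linarith [le_max_left ‖A₀ g‖ ‖A₁ g‖, le_max_right ‖A₀ g‖ ‖A₁ g‖]
  calc ‖g‖ ≤ max C₀ 0 * (‖A₀ g‖ + ‖A₁ g‖) :=
        (hbound g).trans (by gcongr; exact le_max_left _ _)
    _ ≤ max C₀ 0 * (2 * ‖A₀.prod A₁ g‖) := by gcongr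
    _ = ↑(2 * C₀.toNNReal) * ‖A₀.prod A₁ g‖ := by push_cast [Real.coe_toNNReal']; ring

theorem cauchySeq_of_tendsto_comp (hbound : ∀ g, ‖g‖ ≤ C₀ * (‖A₀ g‖ + ‖A₁ g‖))
    {u : ℕ → E} {y₀ : E₀} {y₁ : E₁} (h₀ : Tendsto (A₀ ∘ u) atTop (𝓝 y₀))
    (h₁ : Tendsto (A₁ ∘ u) atTop (𝓝 y₁)) : CauchySeq u :=
  ((antilipschitzWith_prod_of_norm_le hbound).isUniformInducing
    (A₀.prod A₁).uniformContinuous).cauchy_map_iff.1 (h₀.prodMk_nhds h₁).cauchySeq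

theorem exists_subseq_tendsto_mem_ker [CompleteSpace E] (hA₀ : IsCompactOperator A₀)
    (hbound : ∀ g, ‖g‖ ≤ C₀ * (‖A₀ g‖ + ‖A₁ g‖)) {u : ℕ → E}
    (hu : Bornology.IsBounded (Set.range u)) (h₁ : Tendsto (A₁ ∘ u) atTop (𝓝 0)) :
    ∃ x ∈ LinearMap.ker (A₁ : E →ₗ[ℝ] E₁), ∃ φ : ℕ → ℕ,
      StrictMono φ ∧ Tendsto (u ∘ φ) atTop (𝓝 x) := by
  obtain ⟨K, hK, hAK⟩ := hA₀.image_subset_compact_of_bounded hu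
  obtain ⟨y, -, φ, hφ, hy⟩ :=
    hK.tendsto_subseq fun n => hAK (Set.mem_image_of_mem _ (Set.mem_range_self n))
  obtain ⟨x, hx⟩ := cauchySeq_tendsto_of_complete
    (cauchySeq_of_tendsto_comp hbound hy (h₁.comp hφ.tendsto_atTop))
  refine ⟨x, ?_, φ, hφ, hx⟩
  exact tendsto_nhds_unique ((A₁.continuous.tendsto x).comp hx) (h₁.comp hφ.tendsto_atTop)


theorem exists_norm_mkQ_ker_le [CompleteSpace E] (hA₀ : IsCompactOperator A₀)
    (hbound : ∀ g, ‖g‖ ≤ C₀ * (‖A₀ g‖ + ‖A₁ g‖)) :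
    ∃ C : ℝ, ∀ g, ‖(LinearMap.ker (A₁ : E →ₗ[ℝ] E₁)).mkQ g‖ ≤ C * ‖A₁ g‖ := by
  set K := LinearMap.ker (A₁ : E →ₗ[ℝ] E₁)
  by_contra! hcon
  have hseq : ∀ n : ℕ, ∃ h : E, ‖K.mkQ h‖ = 1 ∧ ‖h‖ < 2 ∧ ‖A₁ h‖ ≤ 1 / (n + 1) := by
    intro n
    obtain ⟨g, hg⟩ := hcon (n + 1)
    have hpos : 0 < ‖K.mkQ g‖ := (by positivity : (0 : ℝ) ≤ _).trans_lt hg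
    obtain ⟨h, h_mk, h_norm, hAh⟩ := exists_norm_mkQ_eq_one_of_pos (A₁ : E →ₗ[ℝ] E₁) hpos
    refine ⟨h, h_mk, h_norm, ?_⟩
    rw [ContinuousLinearMap.coe_coe] at hAh
    rw [hAh, norm_smul, norm_inv, norm_norm, inv_mul_le_iff₀ hpos, mul_one_div,
      le_div_iff₀ (by positivity)]
    linarith
  choose u hu_mk hu_norm hu_A₁ using hseq
  have hbdd : Bornology.IsBounded (Set.range u) :=
    isBounded_iff_forall_norm_le.2 ⟨2, Set.forall_mem_range.2 fun n => (hu_norm n).le⟩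
  have hA₁u : Tendsto (A₁ ∘ u) atTop (𝓝 0) :=
    squeeze_zero_norm hu_A₁ tendsto_one_div_add_atTop_nhds_zero_nat
  obtain ⟨x, hx, φ, -, hφ⟩ := exists_subseq_tendsto_mem_ker hA₀ hbound hbdd hA₁u
  have hmk : Tendsto (fun n => ‖K.mkQ (u (φ n))‖) atTop (𝓝 0) := by
    refine squeeze_zero (fun n => norm_nonneg _) (fun n => ?_)
      (tendsto_iff_norm_sub_tendsto_zero.1 hφ)
    calc ‖K.mkQ (u (φ n))‖ = ‖K.mkQ (u (φ n) - x)‖ := by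
          rw [map_sub, Submodule.mkQ_apply K x, (Submodule.Quotient.mk_eq_zero K).2 hx, sub_zero]
      _ ≤ ‖u (φ n) - x‖ := Submodule.Quotient.norm_mk_le K _
  simp only [hu_mk] at hmk
  exact one_ne_zero (tendsto_nhds_unique tendsto_const_nhds hmk)

end

theorem stmt_12_general {E E₀ E₁ : Type*}
    [NormedAddCommGroup E] [NormedSpace ℝ E] [CompleteSpace E]
    [NormedAddCommGroup E₀] [NormedSpace ℝ E₀]
    [NormedAddCommGroup E₁] [NormedSpace ℝ E₁]
    (A₀ : E →L[ℝ] E₀) (hA₀ : IsCompactOperator A₀)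
    (A₁ : E →L[ℝ] E₁)
    (C₀ : ℝ) (hbound : ∀ g : E, ‖g‖ ≤ C₀ * (‖A₀ g‖ + ‖A₁ g‖)) :
    ∃ C₁ : ℝ, ∀ g : E,
      ⨅ p : LinearMap.ker (A₁ : E →ₗ[ℝ] E₁), ‖g - (p : E)‖ ≤ C₁ * ‖A₁ g‖ := by
  obtain ⟨C₁, hC₁⟩ := exists_norm_mkQ_ker_le hA₀ hbound
  refine ⟨C₁, fun g => ?_⟩
  rw [← Submodule.Quotient.norm_mk_eq_iInf_norm_sub]
  exact hC₁ g

/-- Tartar's lemma, step I: under the compactness and norm-bound hypotheses, and assuming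
`E` is reflexive in the sense that every bounded sequence has a weakly convergent
subsequence, there is a constant `C₁` with
`inf_{p ∈ Ker A₁} ‖g − p‖ ≤ C₁ ‖A₁ g‖` for all `g ∈ E`. -/
theorem stmt_12 {E E₀ E₁ : Type*}
    [NormedAddCommGroup E] [NormedSpace ℝ E] [CompleteSpace E]
    [NormedAddCommGroup E₀] [NormedSpace ℝ E₀]
    [NormedAddCommGroup E₁] [NormedSpace ℝ E₁]
    (A₀ : E →L[ℝ] E₀) (hA₀ : IsCompactOperator A₀)
    (A₁ : E →L[ℝ] E₁)
    (C₀ : ℝ) (hbound : ∀ g : E, ‖g‖ ≤ C₀ * (‖A₀ g‖ + ‖A₁ g‖))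
    (hrefl : ∀ g : ℕ → E, Bornology.IsBounded (Set.range g) →
      ∃ (φ : ℕ → ℕ) (x : E), StrictMono φ ∧
        ∀ f : E →L[ℝ] ℝ, Tendsto (fun n => f (g (φ n))) atTop (𝓝 (f x))) :
    ∃ C₁ : ℝ, ∀ g : E,
      ⨅ p : LinearMap.ker (A₁ : E →ₗ[ℝ] E₁), ‖g - (p : E)‖ ≤ C₁ * ‖A₁ g‖ :=
  stmt_12_general A₀ hA₀ A₁ C₀ hbound
end

section
/- (Tartar's lemma, full statement.) Let E be a reflexive Banach space, E₀, E₁, F normed spaces, A₀ : E → E₀ compact linear, A₁ : E → E₁ and L : E → F continuous linear operators. Assume: (i) there exists C₀ with ‖g‖_E ≤ C₀(‖A₀g‖_{E₀} + ‖A₁g‖_{E₁}) for all g; (ii) Ker(A₁) ⊆ Ker(L). Then there exists a constant C such that ‖Lg‖_F ≤ C‖A₁ g‖_{E₁} for all g ∈ E. -/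
open Filter Topology

/-- Tartar's lemma (full statement): `E` a reflexive Banach space (every bounded sequence
has a weakly convergent subsequence), `A₀` compact, `A₁`, `L` continuous linear, with
`‖g‖ ≤ C₀(‖A₀g‖ + ‖A₁g‖)` and `Ker A₁ ⊆ Ker L`.  Then there is a constant `C` with
`‖Lg‖ ≤ C‖A₁g‖` for all `g`. -/
theorem stmt_14 {E E₀ E₁ F : Type*}
    [NormedAddCommGroup E] [NormedSpace ℝ E] [CompleteSpace E]
    [NormedAddCommGroup E₀] [NormedSpace ℝ E₀]
    [NormedAddCommGroup E₁] [NormedSpace ℝ E₁]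
    [NormedAddCommGroup F] [NormedSpace ℝ F]
    (A₀ : E →L[ℝ] E₀) (hA₀ : IsCompactOperator A₀)
    (A₁ : E →L[ℝ] E₁) (L : E →L[ℝ] F)
    (C₀ : ℝ) (hbound : ∀ g : E, ‖g‖ ≤ C₀ * (‖A₀ g‖ + ‖A₁ g‖))
    (hker : LinearMap.ker (A₁ : E →ₗ[ℝ] E₁) ≤ LinearMap.ker (L : E →ₗ[ℝ] F))
    (hrefl : ∀ g : ℕ → E, Bornology.IsBounded (Set.range g) →
      ∃ (φ : ℕ → ℕ) (x : E), StrictMono φ ∧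
        ∀ f : E →L[ℝ] ℝ, Tendsto (fun n => f (g (φ n))) atTop (𝓝 (f x))) :
    ∃ C : ℝ, ∀ g : E, ‖L g‖ ≤ C * ‖A₁ g‖ := by
  set K : Set E := (LinearMap.ker (A₁ : E →ₗ[ℝ] E₁) : Set E) with hK
  have hKne : K.Nonempty := ⟨0, Submodule.zero_mem _⟩
  -- Main claim: distance to the kernel is controlled by ‖A₁ g‖.
  have claim : ∃ C₁ : ℝ, ∀ g : E, Metric.infDist g K ≤ C₁ * ‖A₁ g‖ := by
    by_contra hcon
    push_neg at hcon
    -- for each n, pick gₙ with (n+1)*‖A₁ gₙ‖ < infDist gₙ K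
    choose g hg using fun n : ℕ => hcon (n + 1 : ℕ)
    have hd : ∀ n, 0 < Metric.infDist (g n) K := by
      intro n
      refine lt_of_le_of_lt ?_ (hg n)
      positivity
    -- pick pₙ ∈ K with dist (g n) pₙ < 2 * infDist
    have hp : ∀ n, ∃ p ∈ K, dist (g n) p < 2 * Metric.infDist (g n) K := by
      intro n
      exact (Metric.infDist_lt_iff hKne).1 (by linarith [hd n])
    choose p hpK hpd using hp
    set d : ℕ → ℝ := fun n => Metric.infDist (g n) K with hdd
    set w : ℕ → E := fun n => (d n)⁻¹ • (g n - p n) with hw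
    have hwnorm : ∀ n, ‖w n‖ ≤ 2 := by
      intro n
      have hdn : 0 < d n := hd n
      rw [hw]
      simp only [norm_smul, norm_inv, Real.norm_eq_abs, abs_of_pos hdn]
      rw [inv_mul_le_iff₀ hdn]
      have : dist (g n) (p n) < 2 * d n := hpd n
      rw [dist_eq_norm] at this
      nlinarith
    have hwA₁ : ∀ n, ‖A₁ (w n)‖ < 1 / (n + 1 : ℝ) := by
      intro n
      have hdn := hd n
      have h1 : ((n : ℝ) + 1) * ‖A₁ (g n)‖ < d n := by exact_mod_cast hg n
      have : A₁ (w n) = (d n)⁻¹ • (A₁ (g n) - A₁ (p n)) := by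
        simp [hw, map_smul, map_sub]
      have hpker : A₁ (p n) = 0 := hpK n
      rw [this, hpker, sub_zero, norm_smul, norm_inv, Real.norm_eq_abs,
        abs_of_pos hdn]
      rw [inv_mul_lt_iff₀ hdn, mul_one_div, lt_div_iff₀ (by positivity : (0:ℝ) < (n:ℝ)+1)]
      linarith
    have hwlow : ∀ n, ∀ q ∈ K, 1 ≤ ‖w n - q‖ := by
      intro n q hq
      have hdn := hd n
      have hmem : p n + (d n) • q ∈ K := by
        exact Submodule.add_mem _ (hpK n) (Submodule.smul_mem _ _ hq)
      have hle : d n ≤ ‖g n - (p n + (d n) • q)‖ := by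
        have := Metric.infDist_le_dist_of_mem (x := g n) hmem
        rwa [dist_eq_norm] at this
      have heq : w n - q = (d n)⁻¹ • (g n - (p n + (d n) • q)) := by
        show (d n)⁻¹ • (g n - p n) - q = (d n)⁻¹ • (g n - (p n + (d n) • q))
        rw [smul_sub, smul_sub, smul_add, smul_smul,
          inv_mul_cancel₀ (ne_of_gt hdn), one_smul]
        abel
      rw [heq, norm_smul, norm_inv, Real.norm_eq_abs, abs_of_pos hdn]
      rw [le_inv_mul_iff₀ hdn, mul_one]
      exact hle
    -- compactness: extract subsequence with A₀ (w (φ n)) convergent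
    obtain ⟨Kc, hKc, hKcsub⟩ :=
      hA₀.image_closedBall_subset_compact (f := (A₀ : E →ₗ[ℝ] E₀)) (σ₁₂ := RingHom.id ℝ) 2
    have hmem : ∀ n, A₀ (w n) ∈ Kc := by
      intro n
      exact hKcsub ⟨w n, Metric.mem_closedBall.2 (by simpa using hwnorm n), rfl⟩
    obtain ⟨y, _, φ, hφ, hty⟩ := hKc.tendsto_subseq hmem
    set u : ℕ → E := fun n => w (φ n) with hu
    have hA₀cauchy : CauchySeq (fun n => A₀ (u n)) := hty.cauchySeq
    have hA₁tend : Tendsto (fun n => A₁ (u n)) atTop (𝓝 0) := by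
      have h0 : Tendsto (fun n => A₁ (w n)) atTop (𝓝 0) := by
        rw [tendsto_zero_iff_norm_tendsto_zero]
        refine squeeze_zero (fun n => norm_nonneg _) (fun n => le_of_lt (hwA₁ n)) ?_
        exact tendsto_one_div_add_atTop_nhds_zero_nat
      exact h0.comp hφ.tendsto_atTop
    have hA₁cauchy : CauchySeq (fun n => A₁ (u n)) := hA₁tend.cauchySeq
    -- u is Cauchy
    have hucauchy : CauchySeq u := by
      rw [Metric.cauchySeq_iff]
      intro ε hε
      have hεp : 0 < ε / (2 * (|C₀| + 1)) := by positivity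
      obtain ⟨N₀, hN₀⟩ := Metric.cauchySeq_iff.1 hA₀cauchy _ hεp
      obtain ⟨N₁, hN₁⟩ := Metric.cauchySeq_iff.1 hA₁cauchy _ hεp
      refine ⟨max N₀ N₁, fun m hm n hn => ?_⟩
      have h0 := hN₀ m (le_trans (le_max_left _ _) hm) n (le_trans (le_max_left _ _) hn)
      have h1 := hN₁ m (le_trans (le_max_right _ _) hm) n (le_trans (le_max_right _ _) hn)
      have hb := hbound (u m - u n)
      rw [map_sub, map_sub] at hb
      rw [dist_eq_norm] at h0 h1 ⊢
      have hC : C₀ * (‖A₀ (u m) - A₀ (u n)‖ + ‖A₁ (u m) - A₁ (u n)‖) ≤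
          |C₀| * (‖A₀ (u m) - A₀ (u n)‖ + ‖A₁ (u m) - A₁ (u n)‖) := by
        apply mul_le_mul_of_nonneg_right (le_abs_self _)
        positivity
      have habs : |C₀| * (‖A₀ (u m) - A₀ (u n)‖ + ‖A₁ (u m) - A₁ (u n)‖) <
          (|C₀| + 1) * (2 * (ε / (2 * (|C₀| + 1)))) := by
        have h2 : ‖A₀ (u m) - A₀ (u n)‖ + ‖A₁ (u m) - A₁ (u n)‖ <
            2 * (ε / (2 * (|C₀| + 1))) := by linarith
        calc |C₀| * (‖A₀ (u m) - A₀ (u n)‖ + ‖A₁ (u m) - A₁ (u n)‖)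
            ≤ |C₀| * (2 * (ε / (2 * (|C₀| + 1)))) := by
              apply mul_le_mul_of_nonneg_left (le_of_lt h2) (abs_nonneg _)
          _ < (|C₀| + 1) * (2 * (ε / (2 * (|C₀| + 1)))) := by
              apply mul_lt_mul_of_pos_right (lt_add_one _) (by positivity)
      have heq : (|C₀| + 1) * (2 * (ε / (2 * (|C₀| + 1)))) = ε := by
        field_simp
      linarith
    obtain ⟨x₀, hx₀⟩ := cauchySeq_tendsto_of_complete hucauchy
    have hx₀K : x₀ ∈ K := by
      have h1 : Tendsto (fun n => A₁ (u n)) atTop (𝓝 (A₁ x₀)) :=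
        (A₁.continuous.tendsto x₀).comp hx₀
      have := tendsto_nhds_unique h1 hA₁tend
      exact this
    have h1le : ∀ n, 1 ≤ ‖u n - x₀‖ := fun n => hwlow (φ n) x₀ hx₀K
    have htend0 : Tendsto (fun n => ‖u n - x₀‖) atTop (𝓝 0) := by
      rw [← tendsto_zero_iff_norm_tendsto_zero]
      exact tendsto_sub_nhds_zero_iff.2 hx₀
    have : (1 : ℝ) ≤ 0 := le_of_tendsto_of_tendsto' tendsto_const_nhds htend0 h1le
    linarith
  obtain ⟨C₁, hC₁⟩ := claim
  refine ⟨‖L‖ * C₁, fun g => ?_⟩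
  have hLd : ‖L g‖ ≤ ‖L‖ * Metric.infDist g K := by
    refine le_of_forall_pos_le_add fun δ hδ => ?_
    have hε : 0 < δ / (‖L‖ + 1) := by positivity
    obtain ⟨q, hq, hqd⟩ := (Metric.infDist_lt_iff hKne).1
      (show Metric.infDist g K < Metric.infDist g K + δ / (‖L‖ + 1) by linarith)
    have hLq : L q = 0 := hker hq
    have : ‖L g‖ = ‖L (g - q)‖ := by rw [map_sub, hLq, sub_zero]
    rw [this]
    calc ‖L (g - q)‖ ≤ ‖L‖ * ‖g - q‖ := L.le_opNorm _
      _ ≤ ‖L‖ * (Metric.infDist g K + δ / (‖L‖ + 1)) := by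
          apply mul_le_mul_of_nonneg_left _ (norm_nonneg L)
          rw [← dist_eq_norm]
          linarith
      _ = ‖L‖ * Metric.infDist g K + ‖L‖ * (δ / (‖L‖ + 1)) := by ring
      _ ≤ ‖L‖ * Metric.infDist g K + δ := by
          have h3 : ‖L‖ * (δ / (‖L‖ + 1)) ≤ δ := by
            rw [mul_div_assoc']
            rw [div_le_iff₀ (by positivity)]
            nlinarith [norm_nonneg L]
          linarith
  calc ‖L g‖ ≤ ‖L‖ * Metric.infDist g K := hLd
    _ ≤ ‖L‖ * (C₁ * ‖A₁ g‖) := mul_le_mul_of_nonneg_left (hC₁ g) (norm_nonneg L)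
    _ = ‖L‖ * C₁ * ‖A₁ g‖ := by ring
end
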